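/- For X ~ Bin(m, θ) with θ ∈ (0,1), m ≥ 1, and integer k > mθ, the Mills-type ratio of the binomial tail satisfies k/m ≤ P(X ≥ k)/P(X = k) ≤ k(1-θ)/(k - mθ). -/

import Mathlib

/-- Mills-type ratio for the binomial tail:
k/m ≤ P(X ≥ k)/P(X = k) ≤ k(1-θ)/(k - mθ) for mθ < k ≤ m. -/
theorem binomial_mills_ratio (m k : ℕ) (θ : ℝ) (hθ : θ ∈ Set.Ioo (0 : ℝ) 1)
    (hm : 1 ≤ m) (hk1 : (m : ℝ) * θ < k) (hk2 : k ≤ m)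
    (φθ : ℕ → ℝ) (hφ : ∀ q, φθ q = (m.choose q : ℝ) * θ ^ q * (1 - θ) ^ (m - q))
    (Bbar : ℕ → ℝ) (hB : ∀ q, Bbar q = ∑ z ∈ Finset.Icc q m, φθ z) :
    (k : ℝ) / m ≤ Bbar k / φθ k ∧
    Bbar k / φθ k ≤ (k : ℝ) * (1 - θ) / ((k : ℝ) - m * θ) := by
  obtain ⟨hθ0, hθ1⟩ := hθ
  have h1θ : (0:ℝ) < 1 - θ := by linarith
  have hm0 : (0:ℝ) < m := by exact_mod_cast hm
  have hk0 : (0:ℝ) < k := lt_of_le_of_lt (by positivity) hk1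
  have hkm : (k:ℝ) ≤ m := by exact_mod_cast hk2
  have hφnn : ∀ q, 0 ≤ φθ q := by
    intro q; rw [hφ]; positivity
  have hφk : 0 < φθ k := by
    rw [hφ]
    have : 0 < (m.choose k : ℝ) := by
      exact_mod_cast Nat.choose_pos hk2
    positivity
  constructor
  · -- lower bound
    have h1 : φθ k ≤ Bbar k := by
      rw [hB]
      exact Finset.single_le_sum (fun i _ => hφnn i)
        (Finset.mem_Icc.mpr ⟨le_refl k, hk2⟩)
    have h2 : (1:ℝ) ≤ Bbar k / φθ k := (one_le_div hφk).mpr h1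
    have h3 : (k:ℝ)/m ≤ 1 := by
      rw [div_le_one hm0]; exact hkm
    linarith
  · -- upper bound
    set r : ℝ := ((m:ℝ) - k) * θ / ((k:ℝ) * (1 - θ)) with hr
    have hrnn : 0 ≤ r := by
      apply div_nonneg
      · nlinarith
      · positivity
    have hr1 : r < 1 := by
      rw [hr, div_lt_one (by positivity)]
      nlinarith
    -- step inequality
    have step : ∀ q, k ≤ q → φθ (q+1) ≤ r * φθ q := by
      intro q hq
      by_cases hqm : q < m
      · have hms : m - q = (m - (q+1)) + 1 := by omega
        have hch : (m.choose (q+1) : ℝ) * ((q:ℝ)+1) = (m.choose q : ℝ) * ((m:ℝ) - q) := by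
          have h := Nat.choose_succ_right_eq m q
          have h2 : ((m.choose (q+1) * (q+1) : ℕ) : ℝ) = ((m.choose q * (m-q) : ℕ) : ℝ) := by
            exact_mod_cast congrArg Nat.cast h
          push_cast [Nat.cast_sub hqm.le] at h2
          linarith
        have key : φθ (q+1) * (((q:ℝ)+1) * (1-θ)) = φθ q * (((m:ℝ) - q) * θ) := by
          rw [hφ, hφ, hms, pow_succ, pow_succ]
          linear_combination (θ ^ q * θ * (1 - θ) ^ (m - (q+1)) * (1 - θ)) * hch
        have hq1 : (0:ℝ) < ((q:ℝ)+1) * (1-θ) := by positivity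
        have hφq1 : φθ (q+1) = φθ q * ((((m:ℝ) - q) * θ) / (((q:ℝ)+1) * (1-θ))) := by
          rw [← mul_div_assoc]
          field_simp
          linarith [key]
        have hqk : (k:ℝ) ≤ q := by exact_mod_cast hq
        have hqm' : (q:ℝ) < m := by exact_mod_cast hqm
        have hratio : (((m:ℝ) - q) * θ) / (((q:ℝ)+1) * (1-θ)) ≤ r := by
          rw [hr, div_le_div_iff₀ hq1 (by positivity)]
          have hpoly : (0:ℝ) ≤ (m:ℝ)*((q:ℝ)+1) - (k:ℝ)*((m:ℝ)+1) := by nlinarith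
          nlinarith [mul_nonneg (mul_nonneg hθ0.le h1θ.le) hpoly]
        rw [hφq1, mul_comm r (φθ q)]
        exact mul_le_mul_of_nonneg_left hratio (hφnn q)
      · have hz : m.choose (q+1) = 0 := Nat.choose_eq_zero_of_lt (by omega)
        rw [hφ, hz]
        simpa using mul_nonneg hrnn (hφnn q)
    -- φθ (k+j) ≤ φθ k * r^j
    have decay : ∀ j, φθ (k+j) ≤ φθ k * r^j := by
      intro j
      induction j with
      | zero => simp
      | succ n ih =>
        calc φθ (k+(n+1)) = φθ ((k+n)+1) := by ring_nf
          _ ≤ r * φθ (k+n) := step (k+n) (Nat.le_add_right k n)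
          _ ≤ r * (φθ k * r^n) := mul_le_mul_of_nonneg_left ih hrnn
          _ = φθ k * r^(n+1) := by ring
    have hsum : Bbar k ≤ φθ k * ∑ j ∈ Finset.range (m + 1 - k), r^j := by
      rw [hB, show Finset.Icc k m = Finset.Ico k (m+1) from (Finset.Ico_add_one_right_eq_Icc k m).symm,
        Finset.sum_Ico_eq_sum_range, Finset.mul_sum]
      exact Finset.sum_le_sum (fun i _ => decay i)
    have h1r0 : 0 < 1 - r := by linarith
    have hgeom : ∑ j ∈ Finset.range (m + 1 - k), r^j ≤ 1 / (1 - r) := by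
      rw [geom_sum_eq (ne_of_lt hr1)]
      have heq : (r ^ (m+1-k) - 1) / (r - 1) = (1 - r ^ (m+1-k)) / (1 - r) := by
        rw [← neg_div_neg_eq]; ring_nf
      rw [heq, div_le_div_iff₀ h1r0 h1r0]
      nlinarith [mul_nonneg (pow_nonneg hrnn (m+1-k)) h1r0.le]
    have hC : 1 / (1-r) = (k:ℝ) * (1 - θ) / ((k:ℝ) - m * θ) := by
      rw [hr]
      rw [show (1:ℝ) - ((m:ℝ) - k) * θ / ((k:ℝ) * (1 - θ))
          = ((k:ℝ) - m*θ) / ((k:ℝ) * (1-θ)) from by field_simp; ring]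
      rw [one_div_div]
    have hfinal : Bbar k ≤ φθ k * ((k:ℝ) * (1 - θ) / ((k:ℝ) - m * θ)) := by
      calc Bbar k ≤ φθ k * ∑ j ∈ Finset.range (m + 1 - k), r^j := hsum
        _ ≤ φθ k * (1/(1-r)) := mul_le_mul_of_nonneg_left hgeom hφk.le
        _ = φθ k * ((k:ℝ) * (1 - θ) / ((k:ℝ) - m * θ)) := by rw [hC]
    rw [div_le_iff₀ hφk]
    linarith [hfinal]
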